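/- arXiv:2205.05621 — 2 statements merged into one kernel-verified Lean document; each statement's English description precedes it below -/
import Mathlib

section
/- Let Σ be a finite alphabet, n ≥ 1, and let L ⊆ (Σ*)^n be an n-regular language. Let θ : (Σ*)^n → Σ* be the map (w_1, w_2, ..., w_n) ↦ w_1 w_2 ⋯ w_n that concatenates the coordinates of a tuple. Then θ(L) ⊆ Σ* is an EDT0L language. -/
open scoped Pointwise

/-- Rational subsets of a monoid: the smallest collection of subsets containing all
finite subsets and closed under binary union, elementwise product, and generated submonoid. -/
inductive IsRationalSet {M : Type*} [Monoid M] : Set M → Prop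
  | finite (S : Set M) : S.Finite → IsRationalSet S
  | union (S T : Set M) : IsRationalSet S → IsRationalSet T → IsRationalSet (S ∪ T)
  | mul (S T : Set M) : IsRationalSet S → IsRationalSet T → IsRationalSet (S * T)
  | star (S : Set M) : IsRationalSet S → IsRationalSet (Submonoid.closure S : Set M)

/-- A subset of a commutative additive monoid is linear if it is `a + B*` for a finite `B`. -/
def IsLinearSet' {M : Type*} [AddCommMonoid M] (X : Set M) : Prop :=
  ∃ (a : M) (B : Set M), B.Finite ∧ X = (a + ·) '' (AddSubmonoid.closure B : Set M)

/-- A semilinear set is a finite union of linear sets. -/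
def IsSemilinearSet' {M : Type*} [AddCommMonoid M] (X : Set M) : Prop :=
  ∃ (n : ℕ) (f : Fin n → Set M), (∀ i, IsLinearSet' (f i)) ∧ X = ⋃ i, f i

/-- Elementary regions in `ℤ^k`. -/
def IsElementaryRegion {k : ℕ} (E : Set (Fin k → ℤ)) : Prop :=
  (∃ (u : Fin k → ℤ) (a : ℤ), E = {z | ∑ i, u i * z i = a}) ∨
  (∃ (u : Fin k → ℤ) (a b : ℤ), 0 < b ∧ E = {z | Int.ModEq b (∑ i, u i * z i) a}) ∨
  (∃ (u : Fin k → ℤ) (a : ℤ), E = {z | a < ∑ i, u i * z i})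

/-- A basic polyhedral set is a finite intersection of elementary regions. -/
def IsBasicPolyhedral {k : ℕ} (X : Set (Fin k → ℤ)) : Prop :=
  ∃ (n : ℕ) (f : Fin n → Set (Fin k → ℤ)), (∀ i, IsElementaryRegion (f i)) ∧ X = ⋂ i, f i

/-- A polyhedral set is a finite union of basic polyhedral sets. -/
def IsPolyhedral {k : ℕ} (X : Set (Fin k → ℤ)) : Prop :=
  ∃ (n : ℕ) (f : Fin n → Set (Fin k → ℤ)), (∀ i, IsBasicPolyhedral (f i)) ∧ X = ⋃ i, f i

/-- A subset of `ℤ^k` is monotone if it lies in a single orthant `Q_I`. -/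
def IsMonotoneSet {k : ℕ} (X : Set (Fin k → ℤ)) : Prop :=
  ∃ I : Set (Fin k), ∀ z ∈ X, ∀ i : Fin k, (i ∈ I → 0 ≤ z i) ∧ (i ∉ I → z i < 0)

/-- A rational formal power series over `ℤ`. -/
def IsRationalSeries (S : PowerSeries ℤ) : Prop :=
  ∃ (p q : Polynomial ℤ), q ≠ 0 ∧ (q : PowerSeries ℤ) * S = (p : PowerSeries ℤ)

/-- A group is virtually abelian if it has an abelian subgroup of finite index. -/
def IsVirtuallyAbelian (G : Type*) [Group G] : Prop :=
  ∃ H : Subgroup G, H.FiniteIndex ∧ ∀ x ∈ H, ∀ y ∈ H, x * y = y * x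

/-- The word length of `g` with respect to the generating map `σ : S → G`. -/
noncomputable def wordLength {G : Type*} [Monoid G] {S : Type*} (σ : S → G) (g : G) : ℕ :=
  sInf {n | ∃ w : FreeMonoid S, FreeMonoid.lift σ w = g ∧ w.length = n}

/-- A language over the alphabet `A` is EDT0L if, for some finite extended alphabet `C ⊇ A`,
some start word `w ∈ C*`, and some rational control `R ⊆ End(C*)`, it equals `{φ(w) : φ ∈ R}`. -/
def IsEDT0L {A : Type} (L : Set (FreeMonoid A)) : Prop :=
  ∃ (C : Type) (_ : Fintype C) (emb : A ↪ C) (w : FreeMonoid C)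
    (R : Set (Monoid.End (FreeMonoid C))),
      IsRationalSet R ∧ (FreeMonoid.map (⇑emb)) '' L = (fun φ => φ w) '' R

lemma IsRationalSet.image {M N : Type*} [Monoid M] [Monoid N] (f : M →* N) {S : Set M}
    (h : IsRationalSet S) : IsRationalSet (f '' S) := by
  induction h with
  | finite T hT => exact .finite _ (hT.image f)
  | union T U _ _ ihT ihU => rw [Set.image_union]; exact .union _ _ ihT ihU
  | mul T U _ _ ihT ihU => rw [Set.image_mul]; exact .mul _ _ ihT ihU
  | star T _ ih =>
    have : f '' (Submonoid.closure T : Set M) = (Submonoid.closure (f '' T) : Set N) := by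
      rw [← MonoidHom.map_mclosure, Submonoid.coe_map]
    rw [this]; exact .star _ ih

section Construction
variable (S : Type) (n : ℕ)

abbrev ExtAlph := S ⊕ Fin n

/-- endomorphism attached to a tuple: fixes letters of `S`, sends marker `i` to `⊥ᵢ · uᵢ`. -/
noncomputable def phi (u : Fin n → FreeMonoid S) : Monoid.End (FreeMonoid (ExtAlph S n)) :=
  FreeMonoid.lift (Sum.elim (fun a => FreeMonoid.of (Sum.inl a))
    (fun i => FreeMonoid.of (Sum.inr i) * FreeMonoid.map Sum.inl (u i)))

/-- erasing endomorphism: kills markers. -/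
noncomputable def eps : Monoid.End (FreeMonoid (ExtAlph S n)) :=
  FreeMonoid.lift (Sum.elim (fun a => FreeMonoid.of (Sum.inl a)) (fun _ => 1))

lemma phi_fix (g : Monoid.End (FreeMonoid (ExtAlph S n)))
    (hg : ∀ a : S, g (FreeMonoid.of (Sum.inl a)) = FreeMonoid.of (Sum.inl a))
    (x : FreeMonoid S) : g (FreeMonoid.map (Sum.inl : S → ExtAlph S n) x) =
      FreeMonoid.map Sum.inl x := by
  have : (g : FreeMonoid (ExtAlph S n) →* FreeMonoid (ExtAlph S n)).comp
      (FreeMonoid.map (Sum.inl : S → ExtAlph S n)) = FreeMonoid.map Sum.inl := by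
    apply FreeMonoid.hom_eq
    intro a
    exact hg a
  exact DFunLike.congr_fun this x

noncomputable def Phi : (Fin n → FreeMonoid S) →* Monoid.End (FreeMonoid (ExtAlph S n)) where
  toFun := phi S n
  map_one' := by
    apply FreeMonoid.hom_eq
    intro c
    cases c <;> simp [phi] <;> rfl
  map_mul' u v := by
    change phi S n (u * v) = phi S n u * phi S n v
    apply FreeMonoid.hom_eq
    intro c
    have hmul : ∀ x, (phi S n u * phi S n v) x = phi S n u (phi S n v x) := fun _ => rfl
    show phi S n (u * v) (FreeMonoid.of c) = phi S n u (phi S n v (FreeMonoid.of c))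
    cases c with
    | inl a => rfl
    | inr i =>
      have key : ∀ w : Fin n → FreeMonoid S, phi S n w (FreeMonoid.of (Sum.inr i)) =
          FreeMonoid.of (Sum.inr i) * FreeMonoid.map Sum.inl (w i) := fun _ => rfl
      rw [key, key v, map_mul (phi S n u), key u,
        phi_fix S n (phi S n u) (fun a => rfl) (v i), Pi.mul_apply, map_mul, mul_assoc]

end Construction

lemma key_eval (S : Type) (n : ℕ) (u : Fin n → FreeMonoid S) :
    eps S n (Phi S n u (List.ofFn fun i : Fin n =>
        FreeMonoid.of (Sum.inr i : ExtAlph S n)).prod) =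
      FreeMonoid.map Sum.inl (List.ofFn u).prod := by
  rw [map_list_prod, map_list_prod, map_list_prod, List.map_ofFn, List.map_ofFn, List.map_ofFn]
  refine congrArg List.prod (congrArg List.ofFn (funext fun i => ?_))
  show eps S n (phi S n u (FreeMonoid.of (Sum.inr i))) = FreeMonoid.map Sum.inl (u i)
  have h1 : phi S n u (FreeMonoid.of (Sum.inr i)) =
      FreeMonoid.of (Sum.inr i) * FreeMonoid.map Sum.inl (u i) := rfl
  rw [h1, map_mul]
  have h2 : eps S n (FreeMonoid.of (Sum.inr i : ExtAlph S n)) = 1 := rfl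
  rw [h2, one_mul, phi_fix S n (eps S n) (fun a => rfl)]


theorem forgetful_image_EDT0L (S : Type) [Fintype S] (n : ℕ) (hn : 1 ≤ n)
    (L : Set (Fin n → FreeMonoid S)) (hL : IsRationalSet L) :
    IsEDT0L ((fun u : Fin n → FreeMonoid S => (List.ofFn u).prod) '' L) := by
  refine ⟨ExtAlph S n, inferInstance, ⟨Sum.inl, Sum.inl_injective⟩,
    (List.ofFn fun i : Fin n => FreeMonoid.of (Sum.inr i : ExtAlph S n)).prod,
    {eps S n} * (Phi S n '' L), ?_, ?_⟩
  · exact .mul _ _ (.finite _ (Set.finite_singleton _)) (hL.image (Phi S n))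
  · rw [Set.singleton_mul, Set.image_image, Set.image_image, Set.image_image]
    apply Set.image_congr
    intro u _
    exact (key_eval S n u).symm
end

section
/- Let Σ be a finite alphabet, let x_1, ..., x_r ∈ Σ and y_1, ..., y_l ∈ Σ be letters (r ≥ 1, l ≥ 0), and set m = lr + r. For i = (i_1, ..., i_m) ∈ ℕ^m let ψ(i) ∈ (Σ*)^{m+l} be the (m+l)-tuple (x_1^{i_1}, ..., x_r^{i_r}, y_1, x_1^{i_{r+1}}, ..., x_r^{i_{2r}}, y_2, ..., y_l, x_1^{i_{lr+1}}, ..., x_r^{i_{lr+r}}) in which blocks of r coordinates of powers of x_1,...,x_r alternate with the single-letter coordinates y_1,...,y_l. If X ⊆ ℕ^m is semilinear, then {ψ(i) : i ∈ X} ⊆ (Σ*)^{m+l} is an (m+l)-regular language. -/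
open scoped Pointwise

/-- The map `ψ` sending an exponent vector `i ∈ ℕ^{lr+r}` to the `(lr+r+l)`-tuple
`(x_1^{i_1}, ..., x_r^{i_r}, y_1, x_1^{i_{r+1}}, ..., x_r^{i_{2r}}, y_2, ..., y_l,
x_1^{i_{lr+1}}, ..., x_r^{i_{lr+r}})`. Coordinate `c` belongs to block `q = c / (r+1)`;
if `s = c % (r+1) < r` it is the power `x_{s+1}^{i_{qr+s+1}}`, and if `s = r` it is the
single letter `y_{q+1}`. (The `else 1` branches are dead code: the conditions always hold.) -/
def psiWord (S : Type) (r l : ℕ) (x : Fin r → S) (y : Fin l → S)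
    (i : Fin (l * r + r) → ℕ) : Fin (l * r + r + l) → FreeMonoid S := fun c =>
  if hs : (c : ℕ) % (r + 1) < r then
    if hqs : (c : ℕ) / (r + 1) * r + (c : ℕ) % (r + 1) < l * r + r then
      FreeMonoid.ofList
        (List.replicate (i ⟨(c : ℕ) / (r + 1) * r + (c : ℕ) % (r + 1), hqs⟩)
          (x ⟨(c : ℕ) % (r + 1), hs⟩))
    else 1
  else
    if hq : (c : ℕ) / (r + 1) < l then FreeMonoid.of (y ⟨(c : ℕ) / (r + 1), hq⟩) else 1


/-- The "power part" of `psiWord`: multiplicative in `i`. -/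
def pwAux (S : Type) (r l : ℕ) (x : Fin r → S)
    (i : Fin (l * r + r) → ℕ) : Fin (l * r + r + l) → FreeMonoid S := fun c =>
  if hs : (c : ℕ) % (r + 1) < r then
    if hqs : (c : ℕ) / (r + 1) * r + (c : ℕ) % (r + 1) < l * r + r then
      FreeMonoid.ofList
        (List.replicate (i ⟨(c : ℕ) / (r + 1) * r + (c : ℕ) % (r + 1), hqs⟩)
          (x ⟨(c : ℕ) % (r + 1), hs⟩))
    else 1
  else 1

/-- The constant "letter part" of `psiWord`. -/
def baseAux (S : Type) (r l : ℕ) (y : Fin l → S) : Fin (l * r + r + l) → FreeMonoid S := fun c =>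
  if (c : ℕ) % (r + 1) < r then 1
  else if hq : (c : ℕ) / (r + 1) < l then FreeMonoid.of (y ⟨(c : ℕ) / (r + 1), hq⟩) else 1

lemma psiWord_eq (S : Type) (r l : ℕ) (x : Fin r → S) (y : Fin l → S)
    (i : Fin (l * r + r) → ℕ) :
    psiWord S r l x y i = baseAux S r l y * pwAux S r l x i := by
  funext c
  simp only [psiWord, baseAux, pwAux, Pi.mul_apply]
  by_cases hs : (c : ℕ) % (r + 1) < r <;> simp [hs]

lemma pwAux_zero (S : Type) (r l : ℕ) (x : Fin r → S) :
    pwAux S r l x 0 = 1 := by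
  funext c
  simp only [pwAux, Pi.zero_apply, Pi.one_apply]
  by_cases hs : (c : ℕ) % (r + 1) < r <;> simp [hs]

lemma pwAux_add (S : Type) (r l : ℕ) (x : Fin r → S) (i j : Fin (l * r + r) → ℕ) :
    pwAux S r l x (i + j) = pwAux S r l x i * pwAux S r l x j := by
  funext c
  simp only [pwAux, Pi.add_apply, Pi.mul_apply]
  by_cases hs : (c : ℕ) % (r + 1) < r
  · by_cases hqs : (c : ℕ) / (r + 1) * r + (c : ℕ) % (r + 1) < l * r + r
    · simp only [hs, hqs, dif_pos]
      rw [List.replicate_add]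
      rfl
    · simp [hs, hqs]
  · simp [hs]

lemma isRational_iUnion {N : Type*} [Monoid N] :
    ∀ (n : ℕ) (g : Fin n → Set N), (∀ i, IsRationalSet (g i)) →
      IsRationalSet (⋃ i, g i) := by
  intro n
  induction n with
  | zero =>
    intro g _
    have : (⋃ i : Fin 0, g i) = ∅ := by simp
    rw [this]
    exact .finite _ Set.finite_empty
  | succ n ih =>
    intro g hg
    have : (⋃ i, g i) = g 0 ∪ ⋃ i : Fin n, g i.succ := by
      ext z
      simp [Fin.exists_fin_succ]
    rw [this]
    exact .union _ _ (hg 0) (ih _ fun i => hg i.succ)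

lemma image_closure_aux {M : Type*} [AddCommMonoid M] {N : Type*} [Monoid N] (phi : M → N)
    (h1 : phi 0 = 1) (hmul : ∀ a b, phi (a + b) = phi a * phi b) (B : Set M) :
    phi '' (AddSubmonoid.closure B : Set M) = (Submonoid.closure (phi '' B) : Set N) := by
  ext z
  constructor
  · rintro ⟨m, hm, rfl⟩
    induction hm using AddSubmonoid.closure_induction with
    | mem a ha => exact Submonoid.subset_closure ⟨a, ha, rfl⟩
    | zero => rw [h1]; exact one_mem _
    | add a b _ _ ha hb => rw [hmul]; exact mul_mem ha hb
  · intro hz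
    induction hz using Submonoid.closure_induction with
    | mem a ha =>
      obtain ⟨b, hb, rfl⟩ := ha
      exact ⟨b, AddSubmonoid.subset_closure hb, rfl⟩
    | one => exact ⟨0, zero_mem _, h1⟩
    | mul a b _ _ iha ihb =>
      obtain ⟨u, hu, rfl⟩ := iha
      obtain ⟨v, hv, rfl⟩ := ihb
      exact ⟨u + v, add_mem hu hv, hmul u v⟩

theorem patterned_words_of_semilinear_regular (S : Type) [Fintype S] (r l : ℕ) (hr : 1 ≤ r)
    (x : Fin r → S) (y : Fin l → S)
    (X : Set (Fin (l * r + r) → ℕ)) (hX : IsSemilinearSet' X) :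
    IsRationalSet (psiWord S r l x y '' X) := by
  obtain ⟨n, f, hf, rfl⟩ := hX
  rw [Set.image_iUnion]
  apply isRational_iUnion
  intro i
  obtain ⟨a, B, hBfin, hfB⟩ := hf i
  have key : psiWord S r l x y '' (f i)
      = {baseAux S r l y} * ({pwAux S r l x a} *
          (Submonoid.closure (pwAux S r l x '' B) : Set _)) := by
    rw [hfB, ← image_closure_aux (pwAux S r l x) (pwAux_zero S r l x) (pwAux_add S r l x) B,
      Set.singleton_mul, Set.singleton_mul, Set.image_image, Set.image_image, Set.image_image]
    apply Set.image_congr'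
    intro b
    rw [psiWord_eq, pwAux_add]
  rw [key]
  exact .mul _ _ (.finite _ (Set.finite_singleton _))
    (.mul _ _ (.finite _ (Set.finite_singleton _))
      (.star _ (.finite _ (hBfin.image _))))
end
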